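/- arXiv:2409.11421 — 3 statements merged into one kernel-verified Lean document; each statement's English description precedes it below -/
import Mathlib

section
/- Let G be a finite simple graph with vertex set {v_1, ..., v_s} enumerated by N = (v_1, ..., v_s), and let k be a positive integer. Two edges v_i v_j and v_r v_l of G (with i < j and r < l) are called k-secant with respect to N if i < r < j < l and j - r ≥ k. If G contains no pair of k-secant edges with respect to N, then G is (2k+1)-colorable, i.e., its chromatic number is at most 2k+1. -/
/-- Two edges `v_i v_j` and `v_r v_l` (with `i < j`, `r < l`) of a graph on `Fin s`
(whose enumeration is the natural order) are `k`-secant if `i < r < j < l` and `j - r ≥ k`. -/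
def HasKSecantEdges {s : ℕ} (G : SimpleGraph (Fin s)) (k : ℕ) : Prop :=
  ∃ i r j l : Fin s, i < r ∧ r < j ∧ j < l ∧ G.Adj i j ∧ G.Adj r l ∧ k ≤ j.val - r.val

/-!
Add to the graph every edge `uv` with `0 < v - u ≤ k`; this creates no `k`-secant pair, so we may
assume it. We colour an interval `[a, b]` by induction on its length, keeping the colours of its
first `k` vertices prescribed (pairwise distinct) and giving `b` a colour different from all of them.
If `b > a + k`, let `j` be the last neighbour of `a` before `b` and `W = [t, t + k)` with
`t = max (a + 1) (j + 1 - k)`. Secant-freeness says that no edge jumps over `W` except possibly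
`ab`. Colour `[a, t + k - 1]`, then `[t, b]` with the colours of `W` prescribed, and finally swap the
colour of `b` with one that avoids both the first `k` colours and those of `W`: `2k + 1` colours
suffice for that.
-/

open Set

namespace SecantColoring

variable {α : Type*} {k : ℕ} {E : ℕ → ℕ → Prop}

/-- A relation `E` on `ℕ` stands for the graph whose edges are the pairs `u < v` with `E u v`. -/
def SecantFree (k : ℕ) (E : ℕ → ℕ → Prop) : Prop :=
  ∀ ⦃i r j l : ℕ⦄, i < r → r < j → j < l → E i j → E r l → j - r < k

def ProperOn (E : ℕ → ℕ → Prop) (c : ℕ → α) (a b : ℕ) : Prop :=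
  ∀ ⦃u v : ℕ⦄, a ≤ u → u < v → v ≤ b → E u v → c u ≠ c v

theorem SecantFree.sup_short (h : SecantFree k E) :
    SecantFree k (fun u v => v ≤ u + k ∨ E u v) := by
  rintro i r j l hir hrj hjl (hij | hij) (hrl | hrl)
  all_goals first | omega | exact h hir hrj hjl hij hrl

theorem secantFree_of_not_hasKSecantEdges {s : ℕ} {G : SimpleGraph (Fin s)}
    (h : ¬ HasKSecantEdges G k) : SecantFree k (G.map Fin.valEmbedding).Adj := by
  intro _ _ _ _ hir hrj hjl hij hrl
  obtain ⟨i, j, hG_ij, rfl, rfl⟩ := (SimpleGraph.map_adj _ _ _ _).mp hij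
  obtain ⟨r, l, hG_rl, rfl, rfl⟩ := (SimpleGraph.map_adj _ _ _ _).mp hrl
  by_contra hjr
  exact h ⟨i, r, j, l, hir, hrj, hjl, hG_ij, hG_rl, by simpa using hjr⟩

theorem exists_forall_ne_of_card_lt [Fintype α] [DecidableEq α] {β : Type*} (f : β → α)
    {s : Finset β} (hs : s.card < Fintype.card α) : ∃ δ, ∀ v ∈ s, f v ≠ δ := by
  obtain ⟨δ, -, hδ⟩ := Finset.exists_mem_notMem_of_card_lt_card (s := s.image f)
    (t := Finset.univ) (Finset.card_image_le.trans_lt (by rwa [Finset.card_univ]))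
  exact ⟨δ, fun v hv hvδ => hδ (hvδ ▸ Finset.mem_image_of_mem f hv)⟩

theorem ProperOn.injOn_Ico (hshort : ∀ u v, u < v → v ≤ u + k → E u v) {c : ℕ → α} {a b t : ℕ}
    (hc : ProperOn E c a b) (hat : a ≤ t) (htb : t + k ≤ b + 1) : InjOn c (Ico t (t + k)) := by
  rintro u ⟨hu, hu'⟩ v ⟨hv, hv'⟩ huv
  by_contra hne
  rcases lt_or_gt_of_ne hne with h | h
  · exact hc (by omega) h (by omega) (hshort u v h (by omega)) huv
  · exact hc (by omega) h (by omega) (hshort v u h (by omega)) huv.symm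

theorem ProperOn.exists_recolor [DecidableEq α] {c : ℕ → α} {t b : ℕ} (hc : ProperOn E c t b)
    {W : Set ℕ} (hb : ∀ w ∈ W, c w ≠ c b) (δ : α) (hδ : ∀ w ∈ W, c w ≠ δ) :
    ∃ c' : ℕ → α, ProperOn E c' t b ∧ EqOn c' c W ∧ c' b = δ :=
  ⟨Equiv.swap (c b) δ ∘ c, fun _ _ hu huv hv he => (Equiv.injective _).ne (hc hu huv hv he),
    fun w hw => Equiv.swap_apply_of_ne_of_ne (hb w hw) (hδ w hw), Equiv.swap_apply_left _ _⟩

theorem ProperOn.piecewise {cA cB : ℕ → α} {a t b : ℕ} (hA : ProperOn E cA a (t + k - 1))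
    (hB : ProperOn E cB t b) (hAB : EqOn cA cB (Ico t (t + k)))
    (hcross : ∀ ⦃u v⦄, a ≤ u → u < t → t + k ≤ v → v ≤ b → E u v → cA u ≠ cB v) :
    ProperOn E (fun v => if v < t + k then cA v else cB v) a b := by
  intro u v hau huv hvb he
  by_cases hv : v < t + k
  · simp only [hv, if_true, show u < t + k by omega]
    exact hA hau huv (by omega) he
  simp only [hv, if_false]
  by_cases hu : t ≤ u
  · split_ifs with hu'
    · rw [hAB ⟨hu, hu'⟩]; exact hB hu huv hvb he
    · exact hB hu huv hvb he
  · simp only [show u < t + k by omega, if_true]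
    exact hcross hau (by omega) (by omega) hvb he

theorem exists_cut (hk : 0 < k) (hshort : ∀ u v, u < v → v ≤ u + k → E u v)
    (hsec : SecantFree k E) {a b : ℕ} (hab : a + k < b) :
    ∃ t, a < t ∧ t + k ≤ b ∧
      ∀ ⦃u v⦄, a ≤ u → u < t → t + k ≤ v → v ≤ b → E u v → u = a ∧ v = b := by
  classical
  set j := Nat.findGreatest (E a) (b - 1)
  have hsucc : E a (a + 1) := hshort a (a + 1) (by omega) (by omega)
  have haj : E a j := Nat.findGreatest_spec (by omega) hsucc
  have hj : a + 1 ≤ j := Nat.le_findGreatest (by omega) hsucc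
  have hjb : j ≤ b - 1 := Nat.findGreatest_le _
  refine ⟨max (a + 1) (j + 1 - k), by omega, by omega, fun u v hau hut htv hvb huv => ?_⟩
  rcases hau.eq_or_lt with rfl | hau
  · refine ⟨rfl, ?_⟩
    by_contra hvb'
    have := Nat.le_findGreatest (show v ≤ b - 1 by omega) huv
    omega
  · have := hsec hau (show u < j by omega) (show j < v by omega) haj huv
    omega

theorem exists_properOn_extending_of_le [Fintype α] [DecidableEq α]
    (hα : k < Fintype.card α) {a b : ℕ} {σ : ℕ → α} (hσ : InjOn σ (Ico a (a + k)))
    (hb : b ≤ a + k) :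
    ∃ c : ℕ → α, ProperOn E c a b ∧ EqOn c σ (Ico a (a + k)) ∧
      ∀ v ∈ Ico a (a + k), v < b → c v ≠ c b := by
  obtain ⟨δ, hδ⟩ := exists_forall_ne_of_card_lt σ (s := Finset.Ico a (a + k)) (by simpa)
  have hδ' : ∀ v ∈ Ico a (a + k), σ v ≠ δ := fun v hv => hδ v (by simpa using hv)
  refine ⟨fun v => if v < a + k then σ v else δ, ?_, fun v hv => if_pos hv.2, ?_⟩
  · intro u v hau huv hvb _
    by_cases hv : v < a + k
    · simp only [hv, show u < a + k by omega, if_true]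
      exact hσ.ne ⟨hau, by omega⟩ ⟨by omega, hv⟩ huv.ne
    · simp only [hv, show u < a + k by omega, if_true, if_false]
      exact hδ' u ⟨hau, by omega⟩
  · rintro v ⟨hav, hv⟩ hvb
    by_cases hb' : b < a + k
    · simp only [hv, hb', if_true]
      exact hσ.ne ⟨hav, hv⟩ ⟨by omega, hb'⟩ hvb.ne
    · simp only [hv, hb', if_true, if_false]
      exact hδ' v ⟨hav, hv⟩

theorem exists_properOn_extending [Fintype α] [DecidableEq α] (hk : 0 < k)
    (hα : 2 * k < Fintype.card α) (hshort : ∀ u v, u < v → v ≤ u + k → E u v)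
    (hsec : SecantFree k E) (a b : ℕ) (σ : ℕ → α) (hσ : InjOn σ (Ico a (a + k))) :
    ∃ c : ℕ → α, ProperOn E c a b ∧ EqOn c σ (Ico a (a + k)) ∧
      ∀ v ∈ Ico a (a + k), v < b → c v ≠ c b := by
  induction hn : b - a using Nat.strong_induction_on generalizing a b σ with
  | _ n ih =>
  rcases le_or_gt b (a + k) with hb | hb
  · exact exists_properOn_extending_of_le (by omega) hσ hb
  obtain ⟨t, hat, htb, hcut⟩ := exists_cut hk hshort hsec hb
  obtain ⟨cA, hA, hAσ, -⟩ := ih _ (by omega) a (t + k - 1) σ hσ rfl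
  obtain ⟨cB, hB, hBA, hBb⟩ :=
    ih _ (by omega) t b cA (hA.injOn_Ico hshort hat.le (by omega)) rfl
  obtain ⟨δ, hδ⟩ := exists_forall_ne_of_card_lt cA
    (s := Finset.Ico a (a + k) ∪ Finset.Ico t (t + k))
    ((Finset.card_union_le _ _).trans_lt (by simp only [Nat.card_Ico]; omega))
  obtain ⟨cB', hB', hB'B, hB'b⟩ := hB.exists_recolor (W := Ico t (t + k))
    (fun w hw => hBb w hw (by obtain ⟨_, _⟩ := hw; omega)) δ
    (fun w hw => hBA hw ▸ hδ w (by simpa using Or.inr hw))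
  refine ⟨fun v => if v < t + k then cA v else cB' v,
    hA.piecewise hB' (hB'B.trans hBA).symm ?_, fun v hv => ?_, fun v hv hvb => ?_⟩
  · intro u v hau hut htv hvb huv
    obtain ⟨rfl, rfl⟩ := hcut hau hut htv hvb huv
    rw [hB'b]
    exact hδ u (by simp only [Finset.mem_union, Finset.mem_Ico]; omega)
  · simp only [show v < t + k by obtain ⟨_, _⟩ := hv; omega, if_true]
    exact hAσ hv
  · obtain ⟨hav, hv⟩ := hv
    simp only [show v < t + k by omega, show ¬ b < t + k by omega, if_true, if_false, hB'b]
    exact hδ v (by simp only [Finset.mem_union, Finset.mem_Ico]; omega)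

end SecantColoring

open SecantColoring in
theorem no_k_secant_colorable {s k : ℕ} (hk : 0 < k) (G : SimpleGraph (Fin s))
    (h : ¬ HasKSecantEdges G k) : G.Colorable (2 * k + 1) := by
  have hσ : InjOn (Fin.ofNat (2 * k + 1)) (Ico 0 k) := by
    rintro u ⟨-, hu⟩ v ⟨-, hv⟩ huv
    simpa [Fin.ext_iff, Fin.val_ofNat, Nat.mod_eq_of_lt (show u < 2 * k + 1 by omega),
      Nat.mod_eq_of_lt (show v < 2 * k + 1 by omega)] using huv
  obtain ⟨c, hc, -, -⟩ := exists_properOn_extending (α := Fin (2 * k + 1)) hk (by simp)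
    (fun _ _ _ h => Or.inl h) (secantFree_of_not_hasKSecantEdges h).sup_short 0 s _
    (by rwa [zero_add])
  refine ⟨SimpleGraph.Coloring.mk (c ∘ Fin.val) fun {u v} huv => ?_⟩
  have hmap {x y : Fin s} (hxy : G.Adj x y) : (G.map Fin.valEmbedding).Adj x.val y.val :=
    SimpleGraph.map_adj_apply.mpr hxy
  rcases lt_or_gt_of_ne (Fin.val_ne_of_ne huv.ne) with hlt | hlt
  · exact hc (Nat.zero_le _) hlt v.2.le (Or.inr (hmap huv))
  · exact (hc (Nat.zero_le _) hlt u.2.le (Or.inr (hmap huv.symm))).symm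
end

section
/- Let G be a finite simple graph with an enumeration N = (v_1, ..., v_s) of its vertices, and let k be a positive integer. If G contains no pair of k-secant edges with respect to N, then G has a vertex of degree at most 2k. -/
namespace SimpleGraph

variable {s k : ℕ} (G : SimpleGraph (Fin s))

def IsLongAdj (k : ℕ) (u w : Fin s) : Prop :=
  G.Adj u w ∧ u.val + k < w.val

theorem degree_le_of_forall_adj_near [DecidableRel G.Adj] (v : Fin s)
    (hnear : ∀ u, G.Adj v u → u.val ≤ v.val + k ∧ v.val ≤ u.val + k) :
    G.degree v ≤ 2 * k := by
  have hmaps : Set.MapsTo Fin.val (G.neighborFinset v : Set (Fin s))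
      ((Finset.Icc (v.val - k) (v.val + k)).erase v.val : Finset ℕ) := by
    intro u hu
    rw [Finset.mem_coe, mem_neighborFinset] at hu
    have hne : u.val ≠ v.val := Fin.val_ne_of_ne (G.ne_of_adj hu).symm
    have := hnear u hu
    simp only [Finset.coe_erase, Set.mem_sdiff, Finset.mem_coe, Finset.mem_Icc,
      Set.mem_singleton_iff]
    omega
  have hcard := Finset.card_le_card_of_injOn Fin.val hmaps Fin.val_injective.injOn
  rw [Finset.card_erase_of_mem (Finset.mem_Icc.mpr ⟨Nat.sub_le _ _, Nat.le_add_right _ _⟩),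
    Nat.card_Icc] at hcard
  rw [← card_neighborFinset_eq_degree]
  omega

theorem exists_isLongAdj_of_lt_degree [DecidableRel G.Adj] (v : Fin s)
    (hdeg : 2 * k < G.degree v) : ∃ u, G.IsLongAdj k u v ∨ G.IsLongAdj k v u := by
  by_contra! hfar
  refine hdeg.not_ge (G.degree_le_of_forall_adj_near v fun u hu => ?_)
  simpa only [IsLongAdj, G.adj_symm hu, hu, true_and, not_lt, and_comm] using hfar u

theorem hasKSecantEdges_of_forall_exists_isLongAdj [Nonempty (Fin s)] (hk : 0 < k)
    (hlong : ∀ v, ∃ u, G.IsLongAdj k u v ∨ G.IsLongAdj k v u) : HasKSecantEdges G k := by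
  have hends : {b | ∃ a, G.IsLongAdj k a b}.Nonempty := by
    obtain ⟨u, hu⟩ := hlong (Classical.arbitrary _)
    rcases hu with hu | hu
    exacts [⟨_, u, hu⟩, ⟨u, _, hu⟩]
  obtain ⟨b, ⟨a₀, ha₀⟩, hb_min⟩ := wellFounded_lt.has_min _ hends
  obtain ⟨a, hab, ha_max⟩ :=
    wellFounded_gt.has_min {a | G.IsLongAdj k a b} ⟨a₀, ha₀⟩
  have hab_far := hab.2
  let c : Fin s := ⟨a.val + 1, by omega⟩
  have hc : c.val = a.val + 1 := rfl
  have hac : a < c := Fin.lt_def.mpr (Nat.lt_succ_self _)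
  have hcb : c < b := Fin.lt_def.mpr (by omega)
  obtain ⟨u, hcu | hcu⟩ := hlong c
  · exact absurd hcb (hb_min c ⟨u, hcu⟩)
  · have hub : b < u := by
      rcases lt_trichotomy u b with hlt | rfl | hgt
      · exact absurd hlt (hb_min u ⟨c, hcu⟩)
      · exact absurd hac (ha_max c hcu)
      · exact hgt
    exact ⟨a, c, b, u, hac, hcb, hub, hab.1, hcu.1, by have := hcu.2; omega⟩

end SimpleGraph

theorem no_secant_small_degree_vertex {s k : ℕ} (hk : 0 < k) (hs : 0 < s)
    (G : SimpleGraph (Fin s)) [DecidableRel G.Adj] (h : ¬ HasKSecantEdges G k) :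
    ∃ v : Fin s, G.degree v ≤ 2 * k := by
  by_contra! hdeg
  have : Nonempty (Fin s) := ⟨⟨0, hs⟩⟩
  exact h (G.hasKSecantEdges_of_forall_exists_isLongAdj hk fun v =>
    G.exists_isLongAdj_of_lt_degree v (hdeg v))
end

section
/- Let G be a finite simple graph with an enumeration N = (v_1, ..., v_s) of its vertices, and let k be a positive integer. If the chromatic number of G is at least 2k+2, then G contains a pair of k-secant edges with respect to N, i.e., there exist edges v_i v_j and v_r v_l with i < r < j < l and j - r ≥ k. -/
/-- For a strictly monotone map into `ℕ`, the image gap is at least the index gap. -/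
private lemma strictMono_gap {n : ℕ} (ψ : Fin n → ℕ) (h : StrictMono ψ) :
    ∀ d : ℕ, ∀ r j : Fin n, (j : ℕ) = (r : ℕ) + d → ψ r + d ≤ ψ j := by
  intro d
  induction d with
  | zero =>
      intro r j hj
      have : r = j := Fin.ext (by omega)
      simp [this]
  | succ d ih =>
      intro r j hj
      have hlt : (r : ℕ) + d < n := by
        have := j.isLt; omega
      set j' : Fin n := ⟨(r : ℕ) + d, hlt⟩ with hj'
      have h1 : ψ r + d ≤ ψ j' := ih r j' rfl
      have h2 : ψ j' < ψ j := h (by simp [Fin.lt_def, hj']; omega)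
      omega

/-- Core lemma: in a nonempty graph on `Fin n` (all positions occupied) with no `k`-secant
edges, some vertex has degree at most `2k`. -/
private lemma exists_low_degree {n k : ℕ} (hk : 0 < k) (B : SimpleGraph (Fin n))
    [DecidableRel B.Adj] (hsec : ¬ HasKSecantEdges B k) (hn : 0 < n) :
    ∃ v : Fin n, B.degree v ≤ 2 * k := by
  by_contra hcon
  push_neg at hcon
  -- every vertex has a "long" neighbor (distance at least k+1)
  have hlong : ∀ v : Fin n, ∃ w : Fin n,
      B.Adj v w ∧ ((w : ℕ) + k + 1 ≤ (v : ℕ) ∨ (v : ℕ) + k + 1 ≤ (w : ℕ)) := by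
    intro v
    by_contra hno
    push_neg at hno
    have hsub : ∀ w ∈ B.neighborFinset v,
        (w : ℕ) ∈ (Finset.Icc ((v : ℕ) - k) ((v : ℕ) + k)).erase (v : ℕ) := by
      intro w hw
      rw [SimpleGraph.mem_neighborFinset] at hw
      obtain ⟨h1, h2⟩ := hno w hw
      have hne : w ≠ v := B.ne_of_adj hw.symm
      refine Finset.mem_erase.mpr ⟨?_, Finset.mem_Icc.mpr ⟨by omega, by omega⟩⟩
      intro hval
      exact hne (Fin.ext hval)
    have hcard : B.degree v ≤ ((Finset.Icc ((v : ℕ) - k) ((v : ℕ) + k)).erase (v : ℕ)).card := by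
      rw [← SimpleGraph.card_neighborFinset_eq_degree]
      exact Finset.card_le_card_of_injOn (fun w => (w : ℕ)) hsub
        (fun a _ b _ hab => Fin.ext hab)
    have hicc : ((Finset.Icc ((v : ℕ) - k) ((v : ℕ) + k)).erase (v : ℕ)).card ≤ 2 * k := by
      rw [Finset.card_erase_of_mem (Finset.mem_Icc.mpr ⟨Nat.sub_le _ _, Nat.le_add_right _ _⟩)]
      rw [Nat.card_Icc]
      omega
    exact absurd (hcon v) (by omega)
  -- the set of right endpoints of long edges
  classical
  let J : Finset (Fin n) :=
    Finset.univ.filter (fun q => ∃ p : Fin n, B.Adj p q ∧ (p : ℕ) + k + 1 ≤ (q : ℕ))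
  have hJne : J.Nonempty := by
    obtain ⟨w, hadj, hcase⟩ := hlong ⟨0, hn⟩
    rcases hcase with hdown | hup
    · exact ⟨⟨0, hn⟩, Finset.mem_filter.mpr ⟨Finset.mem_univ _, ⟨w, hadj.symm, hdown⟩⟩⟩
    · exact ⟨w, Finset.mem_filter.mpr ⟨Finset.mem_univ _, ⟨⟨0, hn⟩, hadj, hup⟩⟩⟩
  set j : Fin n := J.min' hJne with hjdef
  obtain ⟨p, hpadj, hpgap⟩ :
      ∃ p : Fin n, B.Adj p j ∧ (p : ℕ) + k + 1 ≤ (j : ℕ) :=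
    (Finset.mem_filter.mp (J.min'_mem hJne)).2
  -- the vertex z at distance exactly k below j
  have hzlt : (j : ℕ) - k < n := by have := j.isLt; omega
  set z : Fin n := ⟨(j : ℕ) - k, hzlt⟩ with hzdef
  have hpz : p < z := by
    rw [Fin.lt_def]; simp only [hzdef]; omega
  have hzj : z < j := by
    rw [Fin.lt_def]; simp only [hzdef]; omega
  obtain ⟨w, hzw, hwc⟩ := hlong z
  rcases hwc with hdown | hup
  · -- long edge ending at z < j contradicts minimality of j
    have hzJ : z ∈ J :=
      Finset.mem_filter.mpr ⟨Finset.mem_univ _, ⟨w, hzw.symm, hdown⟩⟩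
    exact absurd (J.min'_le z hzJ) (not_le.mpr hzj)
  · -- long edge from z going up past j gives a k-secant with (p, j)
    have hjw : j < w := by
      rw [Fin.lt_def]
      have : (z : ℕ) = (j : ℕ) - k := rfl
      omega
    exact hsec ⟨p, z, j, w, hpz, hzj, hjw, hpadj, hzw, by
      have : (z : ℕ) = (j : ℕ) - k := rfl
      omega⟩

/-- Any nonempty subset of vertices contains a vertex with at most `2k` neighbors
inside the subset, provided the graph has no `k`-secant edges. -/
private lemma exists_low_degree_subset {s k : ℕ} (hk : 0 < k) (G : SimpleGraph (Fin s))
    [DecidableRel G.Adj] (hsec : ¬ HasKSecantEdges G k) (S : Finset (Fin s))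
    (hS : S.Nonempty) :
    ∃ v ∈ S, (S.filter (fun u => G.Adj v u)).card ≤ 2 * k := by
  classical
  set n := S.card with hn
  set φ : Fin n ↪o Fin s := S.orderEmbOfFin rfl with hφ
  set B : SimpleGraph (Fin n) :=
    { Adj := fun a b => G.Adj (φ a) (φ b)
      symm := ⟨fun a b hab => G.adj_symm hab⟩
      loopless := ⟨fun a ha => G.irrefl ha⟩ } with hB
  haveI : DecidableRel B.Adj := fun a b => by
    simp only [hB]; infer_instance
  have hψ : StrictMono (fun a : Fin n => ((φ a : Fin s) : ℕ)) := by
    intro a b hab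
    exact Fin.lt_def.mp (φ.strictMono hab)
  have hBsec : ¬ HasKSecantEdges B k := by
    rintro ⟨i, r, j, l, hir, hrj, hjl, haij, harl, hgap⟩
    refine hsec ⟨φ i, φ r, φ j, φ l, φ.strictMono hir, φ.strictMono hrj,
      φ.strictMono hjl, haij, harl, ?_⟩
    have hgap2 := strictMono_gap _ hψ ((j : ℕ) - (r : ℕ)) r j (by
      have := Fin.lt_def.mp hrj; omega)
    omega
  have hn0 : 0 < n := hS.card_pos
  obtain ⟨v', hv'⟩ := exists_low_degree hk B hBsec hn0
  refine ⟨φ v', S.orderEmbOfFin_mem rfl v', ?_⟩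
  have hcardeq : (S.filter (fun u => G.Adj (φ v') u)).card = B.degree v' := by
    rw [← SimpleGraph.card_neighborFinset_eq_degree]
    symm
    apply Finset.card_bij (fun a _ => (φ a : Fin s))
    · intro a ha
      rw [SimpleGraph.mem_neighborFinset] at ha
      exact Finset.mem_filter.mpr ⟨S.orderEmbOfFin_mem rfl a, ha⟩
    · intro a _ b _ hab
      exact φ.injective hab
    · intro u hu
      obtain ⟨huS, huadj⟩ := Finset.mem_filter.mp hu
      have : u ∈ Set.range (S.orderEmbOfFin rfl) := by
        rw [Finset.range_orderEmbOfFin]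
        exact huS
      obtain ⟨a, ha⟩ := this
      refine ⟨a, ?_, ha⟩
      rw [SimpleGraph.mem_neighborFinset]
      show G.Adj (φ v') (φ a)
      rw [show (φ a : Fin s) = u from ha]
      exact huadj
  omega

/-- Main coloring lemma: with no `k`-secant edges, every finite vertex subset can be
properly colored with `2k+1` colors. -/
private lemma exists_coloring {s k : ℕ} (hk : 0 < k) (G : SimpleGraph (Fin s))
    [DecidableRel G.Adj] (hsec : ¬ HasKSecantEdges G k) :
    ∀ S : Finset (Fin s), ∃ C : Fin s → Fin (2 * k + 1),
      ∀ u ∈ S, ∀ w ∈ S, G.Adj u w → C u ≠ C w := by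
  classical
  intro S
  induction S using Finset.strongInduction with
  | _ S ih =>
    rcases S.eq_empty_or_nonempty with rfl | hS
    · exact ⟨fun _ => ⟨0, by omega⟩, by simp⟩
    obtain ⟨v, hvS, hdeg⟩ := exists_low_degree_subset hk G hsec S hS
    obtain ⟨C, hC⟩ := ih (S.erase v) (Finset.erase_ssubset hvS)
    set T : Finset (Fin s) := (S.erase v).filter (fun u => G.Adj v u) with hT
    have hTcard : T.card ≤ 2 * k := by
      refine le_trans (Finset.card_le_card ?_) hdeg
      intro u hu
      obtain ⟨hu1, hu2⟩ := Finset.mem_filter.mp hu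
      exact Finset.mem_filter.mpr ⟨Finset.mem_of_mem_erase hu1, hu2⟩
    have hc : ∃ c : Fin (2 * k + 1), c ∉ T.image C := by
      by_contra hAll
      push_neg at hAll
      have hsub : (Finset.univ : Finset (Fin (2 * k + 1))) ⊆ T.image C :=
        fun c _ => hAll c
      have h1 := Finset.card_le_card hsub
      have h2 := Finset.card_image_le (s := T) (f := C)
      rw [Finset.card_univ, Fintype.card_fin] at h1
      omega
    obtain ⟨c, hc⟩ := hc
    refine ⟨Function.update C v c, ?_⟩
    intro u hu w hw hadj
    have hne : u ≠ w := G.ne_of_adj hadj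
    simp only [Function.update_apply]
    split_ifs with h1 h2 h2
    · exact absurd (h1.trans h2.symm) hne
    · have hwT : w ∈ T :=
        Finset.mem_filter.mpr ⟨Finset.mem_erase.mpr ⟨h2, hw⟩, h1 ▸ hadj⟩
      intro heq
      exact hc (heq ▸ Finset.mem_image_of_mem C hwT)
    · have huT : u ∈ T :=
        Finset.mem_filter.mpr ⟨Finset.mem_erase.mpr ⟨h1, hu⟩, h2 ▸ (G.adj_symm hadj)⟩
      intro heq
      exact hc (heq.symm ▸ Finset.mem_image_of_mem C huT)
    · exact hC u (Finset.mem_erase.mpr ⟨h1, hu⟩) w (Finset.mem_erase.mpr ⟨h2, hw⟩) hadj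

theorem chromatic_forces_secant {s k : ℕ} (hk : 0 < k) (G : SimpleGraph (Fin s))
    (h : (2 * k + 2 : ℕ∞) ≤ G.chromaticNumber) : HasKSecantEdges G k := by
  classical
  by_contra hsec
  obtain ⟨C, hC⟩ := exists_coloring hk G hsec Finset.univ
  have hcol : G.Colorable (2 * k + 1) :=
    ⟨SimpleGraph.Coloring.mk C
      (fun {u w} hadj => hC u (Finset.mem_univ u) w (Finset.mem_univ w) hadj)⟩
  have hle : G.chromaticNumber ≤ ((2 * k + 1 : ℕ) : ℕ∞) := hcol.chromaticNumber_le
  have hcontra : (2 * k + 2 : ℕ∞) ≤ ((2 * k + 1 : ℕ) : ℕ∞) := le_trans h hle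
  have : (2 * k + 2 : ℕ) ≤ 2 * k + 1 := by exact_mod_cast hcontra
  omega
end
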